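/- Let d > 0, let γ ∈ ℂ satisfy K̂(γ) = 1, and let g ∈ L²(Ω,ℂ), not a.e. zero, satisfy L g = θ g for some θ ∈ ℝ, where L is the Neumann nonlocal diffusion operator. Set λ := γ + dθ and φ(a,x) := exp(−γ a − ∫_0^a μ1(s) ds) g(x). Then φ is not a.e. zero, φ(0,·) = ∫_0^{a†} β(a)Π0(a)φ(a,·) da, and for every a ∈ [0,a†], ∂_a φ(a,·) = d·L φ(a,·) − μ1(a)φ(a,·) − λ φ(a,·) in L²(Ω,ℂ). In particular, λ = γ + dθ is an eigenvalue of the generator of the age-structured model with Neumann nonlocal diffusion, which proves the inclusion σ_p(K^a) + d·σ_p(L) ⊆ σ_p(A). -/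

import Mathlib

open MeasureTheory

/-- The natural survival probability `Π0(a) = exp(−∫_0^a μ0(s) ds)`. -/
noncomputable def Pi0 (μ0 : ℝ → ℝ) (a : ℝ) : ℝ :=
  Real.exp (-(∫ s in (0:ℝ)..a, μ0 s))

/-- The characteristic function
`K̂(γ) = ∫_0^{a†} β(a) Π0(a) exp(−∫_0^a μ1(s) ds − γ a) da`. -/
noncomputable def Khat (adag : ℝ) (β μ0 μ1 : ℝ → ℝ) (γ : ℂ) : ℂ :=
  ∫ a in (0:ℝ)..adag, ((β a * Pi0 μ0 a : ℝ) : ℂ) *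
    Complex.exp (-((∫ s in (0:ℝ)..a, μ1 s : ℝ) : ℂ) - γ * a)

/-! `φ(a) = ageProfile γ μ1 a • g` separates variables: the eigen-relation `L g = θ g` turns
`d L φ(a)` into `d θ φ(a)`, so the ODE reduces to the derivative of the scalar factor, and the
birth condition is `K̂(γ) = 1` once `g` is pulled out of the integral. -/

noncomputable def ageProfile (γ : ℂ) (μ1 : ℝ → ℝ) (a : ℝ) : ℂ :=
  Complex.exp (-γ * a - ((∫ s in (0:ℝ)..a, μ1 s : ℝ) : ℂ))

theorem ageProfile_zero (γ : ℂ) (μ1 : ℝ → ℝ) : ageProfile γ μ1 0 = 1 := by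
  simp [ageProfile]

theorem hasDerivAt_ageProfile {μ1 : ℝ → ℝ} (hμ1 : Continuous μ1) (γ : ℂ) (a : ℝ) :
    HasDerivAt (ageProfile γ μ1) (ageProfile γ μ1 a * (-γ - μ1 a)) a := by
  have hcum : HasDerivAt (fun r : ℝ => ∫ s in (0:ℝ)..r, μ1 s) (μ1 a) a :=
    intervalIntegral.integral_hasDerivAt_right (hμ1.intervalIntegrable 0 a)
      hμ1.stronglyMeasurable.stronglyMeasurableAtFilter hμ1.continuousAt
  have hlin : HasDerivAt (fun r : ℝ => -γ * (r : ℂ)) (-γ) a := by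
    simpa using (hasDerivAt_id a).ofReal_comp.const_mul (-γ)
  exact (hlin.sub hcum.ofReal_comp).cexp

theorem integral_smul_ageProfile_smul (adag : ℝ) (β μ0 μ1 : ℝ → ℝ) (γ : ℂ)
    {E : Type*} [NormedAddCommGroup E] [NormedSpace ℝ E] [NormedSpace ℂ E] [CompleteSpace E]
    (g : E) :
    ∫ a in (0:ℝ)..adag, ((β a * Pi0 μ0 a : ℝ) : ℂ) • (ageProfile γ μ1 a • g) =
      Khat adag β μ0 μ1 γ • g := by
  simp_rw [smul_smul]
  rw [intervalIntegral.integral_smul_const, Khat]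
  congr 2 with a
  rw [ageProfile, sub_eq_neg_add, sub_eq_add_neg, neg_mul, add_comm]

theorem not_ae_smul_eq_zero {α 𝕜 E : Type*} [MeasurableSpace α] {μ : Measure α} [NeZero μ]
    [Zero 𝕜] [Zero E] [SMul 𝕜 E] [NoZeroSMulDivisors 𝕜 E]
    {f : α → 𝕜} (hf : ∀ a, f a ≠ 0) {v : E} (hv : v ≠ 0) :
    ¬ ∀ᵐ a ∂μ, f a • v = 0 := fun h =>
  let ⟨a, ha⟩ := h.exists
  (eq_zero_or_eq_zero_of_smul_eq_zero ha).elim (hf a) hv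

theorem smul_map_sub_smul_sub_smul_of_apply_eq_smul {R M F : Type*} [CommRing R]
    [AddCommGroup M] [Module R M] [FunLike F M M] [LinearMapClass F R M M]
    (T : F) {θ : R} {g : M} (hg : T g = θ • g) (c d m γ : R) :
    d • T (c • g) - m • (c • g) - (γ + d * θ) • (c • g) = (c * (-γ - m)) • g := by
  rw [map_smul, hg]
  simp only [smul_smul, ← sub_smul]
  congr 1
  ring

theorem neumann_spectrum_inclusion_general
    {n : ℕ} (Ω : Set (EuclideanSpace ℝ (Fin n)))
    (T : Lp ℂ 2 (volume.restrict Ω) →L[ℂ] Lp ℂ 2 (volume.restrict Ω))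
    (adag : ℝ) (hadag : 0 < adag) (β μ0 μ1 : ℝ → ℝ)
    (hμ1cont : Continuous μ1)
    (d : ℝ)
    (γ : ℂ) (hγ : Khat adag β μ0 μ1 γ = 1)
    (θ : ℝ) (g : Lp ℂ 2 (volume.restrict Ω)) (hgne : g ≠ 0)
    (hgeig : T g = (θ : ℂ) • g) :
    -- φ is not a.e. zero (as an element of L¹([0,a†],L²))
    (¬ (∀ᵐ a ∂(volume.restrict (Set.Ioc 0 adag)),
        (Complex.exp (-γ * a - ((∫ s in (0:ℝ)..a, μ1 s : ℝ) : ℂ))) • g = 0)) ∧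
    -- birth condition φ(0,·) = ∫_0^{a†} β Π0 φ(a,·) da
    ((Complex.exp (-γ * 0 - ((∫ s in (0:ℝ)..(0:ℝ), μ1 s : ℝ) : ℂ))) • g =
      ∫ a in (0:ℝ)..adag, ((β a * Pi0 μ0 a : ℝ) : ℂ) •
        ((Complex.exp (-γ * a - ((∫ s in (0:ℝ)..a, μ1 s : ℝ) : ℂ))) • g)) ∧
    -- the abstract ODE: ∂_a φ(a,·) = d L φ(a,·) − μ1(a) φ(a,·) − λ φ(a,·)
    (∀ a ∈ Set.Icc (0:ℝ) adag,
      HasDerivAt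
        (fun r : ℝ => (Complex.exp (-γ * r - ((∫ s in (0:ℝ)..r, μ1 s : ℝ) : ℂ))) • g)
        ((d : ℂ) • T ((Complex.exp (-γ * a - ((∫ s in (0:ℝ)..a, μ1 s : ℝ) : ℂ))) • g)
          - ((μ1 a : ℝ) : ℂ) •
              ((Complex.exp (-γ * a - ((∫ s in (0:ℝ)..a, μ1 s : ℝ) : ℂ))) • g)
          - (γ + (d : ℂ) * (θ : ℂ)) •
              ((Complex.exp (-γ * a - ((∫ s in (0:ℝ)..a, μ1 s : ℝ) : ℂ))) • g))
        a) := by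
  have : NeZero (volume.restrict (Set.Ioc (0:ℝ) adag)) := ⟨by simp [hadag]⟩
  refine ⟨not_ae_smul_eq_zero (fun a => Complex.exp_ne_zero _) hgne, ?_, fun a _ => ?_⟩
  · change ageProfile γ μ1 0 • g = ∫ a in (0:ℝ)..adag, _ • (ageProfile γ μ1 a • g)
    rw [integral_smul_ageProfile_smul, hγ, ageProfile_zero]
  · change HasDerivAt (fun r => ageProfile γ μ1 r • g)
      (_ • T (ageProfile γ μ1 a • g) - _ • (ageProfile γ μ1 a • g)
        - _ • (ageProfile γ μ1 a • g)) a
    rw [smul_map_sub_smul_sub_smul_of_apply_eq_smul T hgeig]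
    exact (hasDerivAt_ageProfile hμ1cont γ a).smul_const g

/-- For the age-structured model with Neumann nonlocal diffusion
(`T` represents `L g = ∫_Ω J(x−y)(g(y)−g(x)) dy` on `L²(Ω,ℂ)`): if `K̂(γ) = 1` and
`T g = θ g` with `g ≠ 0`, then `φ(a) = exp(−γa − ∫_0^a μ1) g` is a nonzero solution of
the eigenvalue problem for the generator with eigenvalue `λ = γ + dθ`; hence
`σ_p(K^a) + d σ_p(L) ⊆ σ_p(A)`. -/
theorem neumann_spectrum_inclusion
    {n : ℕ} (Ω : Set (EuclideanSpace ℝ (Fin n)))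
    (hΩne : Ω.Nonempty) (hΩo : IsOpen Ω) (hΩb : Bornology.IsBounded Ω)
    (hΩconn : IsConnected Ω)
    (J : EuclideanSpace ℝ (Fin n) → ℝ)
    (hJcont : Continuous J) (hJsupp : HasCompactSupport J)
    (hJnonneg : ∀ x, 0 ≤ J x) (hJsymm : ∀ x, J (-x) = J x)
    (hJint : ∫ x, J x = 1) (hJ0 : 0 < J 0)
    (T : Lp ℂ 2 (volume.restrict Ω) →L[ℂ] Lp ℂ 2 (volume.restrict Ω))
    (hT : ∀ g : Lp ℂ 2 (volume.restrict Ω),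
      T g =ᵐ[volume.restrict Ω] fun x => ∫ y in Ω, (J (x - y) : ℂ) * (g y - g x))
    (adag : ℝ) (hadag : 0 < adag) (β μ0 μ1 : ℝ → ℝ)
    (hβmeas : Measurable β) (hβnonneg : ∀ a, 0 ≤ β a) (hβbdd : ∃ C, ∀ a, β a ≤ C)
    (hμ0pos : ∀ a, 0 < μ0 a)
    (hμ0loc : ∀ b, 0 ≤ b → b < adag → IntegrableOn μ0 (Set.Icc 0 b))
    (hμ0div : ¬ IntegrableOn μ0 (Set.Ico 0 adag))
    (hμ1cont : Continuous μ1) (hμ1nonneg : ∀ a, 0 ≤ μ1 a)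
    (d : ℝ) (hd : 0 < d)
    (γ : ℂ) (hγ : Khat adag β μ0 μ1 γ = 1)
    (θ : ℝ) (g : Lp ℂ 2 (volume.restrict Ω)) (hgne : g ≠ 0)
    (hgeig : T g = (θ : ℂ) • g) :
    -- φ is not a.e. zero (as an element of L¹([0,a†],L²))
    (¬ (∀ᵐ a ∂(volume.restrict (Set.Ioc 0 adag)),
        (Complex.exp (-γ * a - ((∫ s in (0:ℝ)..a, μ1 s : ℝ) : ℂ))) • g = 0)) ∧
    -- birth condition φ(0,·) = ∫_0^{a†} β Π0 φ(a,·) da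
    ((Complex.exp (-γ * 0 - ((∫ s in (0:ℝ)..(0:ℝ), μ1 s : ℝ) : ℂ))) • g =
      ∫ a in (0:ℝ)..adag, ((β a * Pi0 μ0 a : ℝ) : ℂ) •
        ((Complex.exp (-γ * a - ((∫ s in (0:ℝ)..a, μ1 s : ℝ) : ℂ))) • g)) ∧
    -- the abstract ODE: ∂_a φ(a,·) = d L φ(a,·) − μ1(a) φ(a,·) − λ φ(a,·)
    (∀ a ∈ Set.Icc (0:ℝ) adag,
      HasDerivAt
        (fun r : ℝ => (Complex.exp (-γ * r - ((∫ s in (0:ℝ)..r, μ1 s : ℝ) : ℂ))) • g)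
        ((d : ℂ) • T ((Complex.exp (-γ * a - ((∫ s in (0:ℝ)..a, μ1 s : ℝ) : ℂ))) • g)
          - ((μ1 a : ℝ) : ℂ) •
              ((Complex.exp (-γ * a - ((∫ s in (0:ℝ)..a, μ1 s : ℝ) : ℂ))) • g)
          - (γ + (d : ℂ) * (θ : ℂ)) •
              ((Complex.exp (-γ * a - ((∫ s in (0:ℝ)..a, μ1 s : ℝ) : ℂ))) • g))
        a) :=
  neumann_spectrum_inclusion_general Ω T adag hadag β μ0 μ1 hμ1cont d γ hγ θ g hgne hgeig
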